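/- arXiv:1202.3265 — 6 statements merged into one kernel-verified Lean document; each statement's English description precedes it below -/
import Mathlib

section
/- Let Γ be a connected δ-regular graph that is 1-punctually walk-regular, i.e., for every ℓ ≥ 0 the number of walks of length ℓ between adjacent vertices u,v is a constant a_1^{(ℓ)} independent of the choice of edge uv. Then Γ is walk-regular: for every ℓ, the number a_u^{(ℓ)} of closed walks of length ℓ at a vertex u is independent of u, and a^{(ℓ)} = δ · a_1^{(ℓ-1)} for all ℓ > 1. -/
open Matrix Polynomial

/-- If a connected `δ`-regular graph is 1-punctually walk-regular
(the number of walks of a given length between adjacent vertices does not depend on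
the edge), then it is walk-regular, and the numbers of closed walks satisfy
`a^{(ℓ)} = δ · a₁^{(ℓ-1)}` for `ℓ > 1`. -/
theorem stmt_6 {V : Type*} [Fintype V] [DecidableEq V]
    (G : SimpleGraph V) [DecidableRel G.Adj]
    (δ : ℕ) (hreg : G.IsRegularOfDegree δ) (hconn : G.Connected)
    (h1 : ∀ (ℓ : ℕ) (u v u' v' : V), G.Adj u v → G.Adj u' v' →
      ((G.adjMatrix ℝ) ^ ℓ) u v = ((G.adjMatrix ℝ) ^ ℓ) u' v') :
    (∀ (ℓ : ℕ) (u u' : V),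
      ((G.adjMatrix ℝ) ^ ℓ) u u = ((G.adjMatrix ℝ) ^ ℓ) u' u') ∧
    (∀ ℓ : ℕ, 1 < ℓ → ∀ (u u' v' : V), G.Adj u' v' →
      ((G.adjMatrix ℝ) ^ ℓ) u u = (δ : ℝ) * ((G.adjMatrix ℝ) ^ (ℓ - 1)) u' v') := by
  have key : ∀ (ℓ : ℕ) (u a b : V), G.Adj a b →
      ((G.adjMatrix ℝ) ^ (ℓ + 1)) u u = (δ : ℝ) * ((G.adjMatrix ℝ) ^ ℓ) a b := by
    intro ℓ u a b hab
    rw [pow_succ', SimpleGraph.adjMatrix_mul_apply]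
    rw [Finset.sum_congr rfl
      (fun w hw => h1 ℓ w u a b ((SimpleGraph.mem_neighborFinset _ _ _).mp hw).symm hab)]
    rw [Finset.sum_const, show (G.neighborFinset u).card = δ from hreg u, nsmul_eq_mul]
  constructor
  · intro ℓ u u'
    cases ℓ with
    | zero => simp
    | succ n =>
      by_cases h : ∃ a b, G.Adj a b
      · obtain ⟨a, b, hab⟩ := h
        rw [key n u a b hab, key n u' a b hab]
      · push_neg at h
        have he : ∀ x : V, G.neighborFinset x = ∅ := fun x =>
          Finset.eq_empty_of_forall_notMem (fun w hw => h x w ((SimpleGraph.mem_neighborFinset _ _ _).mp hw))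
        rw [pow_succ', SimpleGraph.adjMatrix_mul_apply, SimpleGraph.adjMatrix_mul_apply,
          he u, he u', Finset.sum_empty, Finset.sum_empty]
  · intro ℓ hℓ u u' v' h'
    obtain ⟨m, rfl⟩ : ∃ m, ℓ = m + 1 := ⟨ℓ - 1, (Nat.succ_pred_eq_of_pos (by omega)).symm⟩
    simpa using key m u u' v' h'
end

section
/- Let Γ be a connected δ-regular graph that is 1-punctually walk-regular. Then for every eigenvalue λ_i and every pair of adjacent vertices u,v, the crossed local multiplicity satisfies m_{uv}(λ_i) = (λ_i/λ_0)·(m_i/n), where m_i is the multiplicity of λ_i, λ_0 = δ, and n is the number of vertices. -/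
open Matrix Polynomial

/-- Vandermonde-type independence: if `lam` is injective and
`∑ j, lam j ^ ℓ * x j = 0` for all `ℓ < d + 1` then `x = 0`. -/
lemma stmt7_vand_aux {d : ℕ} (lam : Fin (d + 1) → ℝ) (hinj : Function.Injective lam)
    (x : Fin (d + 1) → ℝ) (h : ∀ ℓ : Fin (d + 1), ∑ j, lam j ^ (ℓ : ℕ) * x j = 0) :
    x = 0 := by
  set M : Matrix (Fin (d + 1)) (Fin (d + 1)) ℝ := (Matrix.vandermonde lam)ᵀ with hM
  have hdet : M.det ≠ 0 := by
    rw [hM, Matrix.det_transpose]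
    exact Matrix.det_vandermonde_ne_zero_iff.mpr hinj
  have hinjM : Function.Injective M.mulVec :=
    Matrix.mulVec_injective_iff_isUnit.mpr
      ((Matrix.isUnit_iff_isUnit_det M).mpr (isUnit_iff_ne_zero.mpr hdet))
  have h0 : M.mulVec x = M.mulVec 0 := by
    rw [Matrix.mulVec_zero]
    funext ℓ
    simpa [M, Matrix.mulVec, dotProduct, Matrix.vandermonde] using h ℓ
  exact hinjM h0

/-- If a connected `δ`-regular graph on `n` vertices is
1-punctually walk-regular, then for every eigenvalue `λᵢ` and every pair of
adjacent vertices `u, v`, the crossed local multiplicity satisfies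
`m_{uv}(λᵢ) = (Eᵢ)_{uv} = (λᵢ/λ₀)·(mᵢ/n)`, where `mᵢ` is the multiplicity of `λᵢ`
and `λ₀ = δ`. -/
theorem stmt_7 {V : Type*} [Fintype V] [DecidableEq V]
    (G : SimpleGraph V) [DecidableRel G.Adj]
    (δ : ℕ) (hreg : G.IsRegularOfDegree δ) (hconn : G.Connected)
    (d : ℕ) (lam : Fin (d + 1) → ℝ) (hlam : StrictAnti lam) (hlam0 : lam 0 = δ)
    (E : Fin (d + 1) → Matrix V V ℝ)
    (hA : G.adjMatrix ℝ = ∑ i, lam i • E i)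
    (hEE : ∀ i j, E i * E j = if i = j then E i else 0)
    (hEsymm : ∀ i, (E i).IsSymm)
    (hsum : ∑ i, E i = 1)
    (n : ℕ) (hn : n = Fintype.card V)
    (m : Fin (d + 1) → ℕ)
    (hmult : ∀ i, (m i : ℝ) =
      (Module.finrank ℝ
        (Module.End.eigenspace (Matrix.mulVecLin (G.adjMatrix ℝ)) (lam i)) : ℝ))
    (h1 : ∀ (ℓ : ℕ) (u v u' v' : V), G.Adj u v → G.Adj u' v' →
      ((G.adjMatrix ℝ) ^ ℓ) u v = ((G.adjMatrix ℝ) ^ ℓ) u' v') :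
    ∀ (i : Fin (d + 1)) (u v : V), G.Adj u v →
      E i u v = (lam i / lam 0) * ((m i : ℝ) / (n : ℝ)) := by
  intro i u v huv
  have hinj : Function.Injective lam := hlam.injective
  -- δ is positive
  have hδpos : 0 < δ := by
    rw [← hreg u, SimpleGraph.degree_pos_iff_exists_adj]
    exact ⟨v, huv⟩
  -- every vertex has a neighbor
  have hnbr : ∀ w : V, ∃ w', G.Adj w w' := by
    intro w
    rw [← SimpleGraph.degree_pos_iff_exists_adj, hreg w]
    exact hδpos
  -- powers of A decompose
  have hApow : ∀ ℓ : ℕ, (G.adjMatrix ℝ) ^ ℓ = ∑ j, lam j ^ ℓ • E j := by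
    intro ℓ
    induction ℓ with
    | zero => simpa using hsum.symm
    | succ ℓ ih =>
      rw [pow_succ, ih, hA, Finset.sum_mul_sum]
      rw [Finset.sum_comm]
      refine Finset.sum_congr rfl fun k _ => ?_
      have : ∀ j : Fin (d + 1),
          (lam j ^ ℓ • E j) * (lam k • E k) =
            if j = k then (lam j ^ ℓ * lam k) • E j else 0 := by
        intro j
        rw [smul_mul_smul_comm, hEE j k]
        split <;> simp
      rw [Finset.sum_congr rfl fun j _ => this j, Finset.sum_ite_eq' _ k,
        if_pos (Finset.mem_univ k), pow_succ]
  -- entry of the decomposition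
  have hentry : ∀ (ℓ : ℕ) (a b : V),
      ((G.adjMatrix ℝ) ^ ℓ) a b = ∑ j, lam j ^ ℓ * E j a b := by
    intro ℓ a b
    rw [hApow ℓ]
    simp [Matrix.sum_apply]
  -- crossed entries are constant over adjacent pairs
  have hconst : ∀ (j : Fin (d + 1)) (a b a' b' : V), G.Adj a b → G.Adj a' b' →
      E j a b = E j a' b' := by
    intro j a b a' b' hab hab'
    have hz : (fun k => E k a b - E k a' b') = 0 := by
      refine stmt7_vand_aux lam hinj _ fun ℓ => ?_
      have := h1 (ℓ : ℕ) a b a' b' hab hab'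
      rw [hentry, hentry] at this
      simp only [mul_sub]
      rw [Finset.sum_sub_distrib, this, sub_self]
    have := congrFun hz j
    simpa [sub_eq_zero] using this
  -- diagonal entries of powers of A are constant
  have hdiagpow : ∀ (ℓ : ℕ) (a b : V),
      ((G.adjMatrix ℝ) ^ ℓ) a a = ((G.adjMatrix ℝ) ^ ℓ) b b := by
    intro ℓ a b
    cases ℓ with
    | zero => simp
    | succ ℓ =>
      obtain ⟨a', ha'⟩ := hnbr a
      obtain ⟨b', hb'⟩ := hnbr b
      have key : ∀ (c c' : V), G.Adj c c' →
          ((G.adjMatrix ℝ) ^ (ℓ + 1)) c c = δ * ((G.adjMatrix ℝ) ^ ℓ) u v := by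
        intro c c' hcc'
        rw [pow_succ']
        rw [SimpleGraph.adjMatrix_mul_apply]
        have : ∀ w ∈ G.neighborFinset c,
            ((G.adjMatrix ℝ) ^ ℓ) w c = ((G.adjMatrix ℝ) ^ ℓ) u v := by
          intro w hw
          exact h1 ℓ w c u v (G.adj_symm ((G.mem_neighborFinset c w).mp hw)) huv
        rw [Finset.sum_congr rfl this, Finset.sum_const,
          show (G.neighborFinset c).card = δ from hreg c, nsmul_eq_mul]
      rw [key a a' ha', key b b' hb']
  -- diagonal entries of each E j are constant
  have hdiagE : ∀ (j : Fin (d + 1)) (a b : V), E j a a = E j b b := by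
    intro j a b
    have hz : (fun k => E k a a - E k b b) = 0 := by
      refine stmt7_vand_aux lam hinj _ fun ℓ => ?_
      have := hdiagpow (ℓ : ℕ) a b
      rw [hentry, hentry] at this
      simp only [mul_sub]
      rw [Finset.sum_sub_distrib, this, sub_self]
    have := congrFun hz j
    simpa [sub_eq_zero] using this
  -- A * E i = lam i • E i
  have hAE : G.adjMatrix ℝ * E i = lam i • E i := by
    rw [hA, Finset.sum_mul]
    have : ∀ j : Fin (d + 1),
        (lam j • E j) * E i = if j = i then lam j • E j else 0 := by
      intro j
      rw [smul_mul_assoc, hEE j i]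
      split <;> simp_all
    rw [Finset.sum_congr rfl fun j _ => this j, Finset.sum_ite_eq' _ i,
      if_pos (Finset.mem_univ i)]
  -- E i is idempotent
  have hEi2 : E i * E i = E i := by simpa using hEE i i
  -- the projection onto the eigenspace
  have hproj : LinearMap.IsProj
      (Module.End.eigenspace (Matrix.mulVecLin (G.adjMatrix ℝ)) (lam i))
      (Matrix.mulVecLin (E i)) := by
    constructor
    · intro x
      rw [Module.End.mem_eigenspace_iff]
      have : G.adjMatrix ℝ *ᵥ (E i *ᵥ x) = lam i • (E i *ᵥ x) := by
        rw [Matrix.mulVec_mulVec, hAE, Matrix.smul_mulVec]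
      simpa [Matrix.mulVecLin_apply] using this
    · intro x hx
      rw [Module.End.mem_eigenspace_iff] at hx
      simp only [Matrix.mulVecLin_apply] at hx ⊢
      -- E j *ᵥ x = 0 for j ≠ i
      have hEj0 : ∀ j : Fin (d + 1), j ≠ i → E j *ᵥ x = 0 := by
        intro j hji
        have hEjA : E j * G.adjMatrix ℝ = lam j • E j := by
          rw [hA, Finset.mul_sum]
          have : ∀ k : Fin (d + 1),
              E j * (lam k • E k) = if j = k then lam j • E j else 0 := by
            intro k
            rw [mul_smul_comm, hEE j k]
            split <;> simp_all
          rw [Finset.sum_congr rfl fun k _ => this k, Finset.sum_ite_eq _ j,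
            if_pos (Finset.mem_univ j)]
        have h1' : E j *ᵥ (G.adjMatrix ℝ *ᵥ x) = lam j • (E j *ᵥ x) := by
          rw [Matrix.mulVec_mulVec, hEjA, Matrix.smul_mulVec]
        rw [hx, Matrix.mulVec_smul] at h1'
        have : (lam i - lam j) • (E j *ᵥ x) = 0 := by
          rw [sub_smul, h1', sub_self]
        have hne : lam i - lam j ≠ 0 := sub_ne_zero.mpr fun e => hji (hinj e).symm
        exact (smul_eq_zero.mp this).resolve_left hne
      have hxsum : ∑ j, E j *ᵥ x = x := by
        have h2 : ∑ j, E j *ᵥ x = (∑ j, E j) *ᵥ x := by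
          ext w
          simp only [Finset.sum_apply, Matrix.mulVec, dotProduct, Matrix.sum_apply,
            Finset.sum_mul]
          rw [Finset.sum_comm]
        rw [h2, hsum, Matrix.one_mulVec]
      calc E i *ᵥ x = ∑ j, E j *ᵥ x := by
            rw [Finset.sum_eq_single i (fun j _ hj => hEj0 j hj) (by simp)]
        _ = x := hxsum
  -- trace of E i equals m i
  have hfree : Module.Free ℝ
      (Module.End.eigenspace (Matrix.mulVecLin (G.adjMatrix ℝ)) (lam i)) :=
    Module.Free.of_divisionRing _ _
  have htrace : Matrix.trace (E i) = (m i : ℝ) := by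
    have ht := hproj.trace
    rw [hmult i]
    rw [← ht]
    rw [LinearMap.trace_eq_matrix_trace ℝ (Pi.basisFun ℝ V),
      LinearMap.toMatrix_eq_toMatrix', ← Matrix.toLin'_apply' (E i),
      LinearMap.toMatrix'_toLin']
  -- diagonal entry equals m i / n
  have hnpos : 0 < n := by
    have : Nonempty V := ⟨u⟩
    rw [hn]; exact Fintype.card_pos
  have hdiag : E i u u = (m i : ℝ) / (n : ℝ) := by
    have : Matrix.trace (E i) = (n : ℝ) * E i u u := by
      have h0 : Matrix.trace (E i) = ∑ w : V, E i w w := rfl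
      rw [h0, Finset.sum_congr rfl fun w _ => hdiagE i w u, Finset.sum_const,
        Finset.card_univ, nsmul_eq_mul, hn]
    rw [this] at htrace
    field_simp at htrace ⊢
    linarith [htrace]
  -- main computation: (A * E i) u u = δ * E i u v
  have hmain : lam i * E i u u = (δ : ℝ) * E i u v := by
    have h2 : (G.adjMatrix ℝ * E i) u u = (δ : ℝ) * E i u v := by
      rw [SimpleGraph.adjMatrix_mul_apply]
      have : ∀ w ∈ G.neighborFinset u, E i w u = E i u v := by
        intro w hw
        exact hconst i w u u v (G.adj_symm ((G.mem_neighborFinset u w).mp hw)) huv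
      rw [Finset.sum_congr rfl this, Finset.sum_const,
        show (G.neighborFinset u).card = δ from hreg u, nsmul_eq_mul]
    rw [hAE] at h2
    simpa using h2
  have hδne : (δ : ℝ) ≠ 0 := Nat.cast_ne_zero.mpr hδpos.ne'
  have hnne : (n : ℝ) ≠ 0 := Nat.cast_ne_zero.mpr hnpos.ne'
  rw [hdiag] at hmain
  rw [hlam0]
  field_simp at hmain ⊢
  linarith [hmain]
end

section
/- Let Γ be a connected δ-regular graph with d+1 distinct eigenvalues and diameter D, let h ≤ D, and suppose A_h = q_h(A) where q_h is a polynomial with h < deg q_h ≤ D. Then this leads to a contradiction; i.e., if A_h = q_h(A) and deg q_h > h, then deg q_h > D. -/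
/-!
Let `n = deg q` and suppose `n ≤ D`. On a geodesic of length `D` there is a pair of vertices
`u, w` at distance `n`. No walk from `u` to `w` is shorter than `n`, so `(A^k)_{uw} = 0` for
`k < n` while `(A^n)_{uw} > 0`; hence `(q(A))_{uw} = lc(q) · (A^n)_{uw} ≠ 0`. But `h < n`, so
`(A_h)_{uw} = 0`.
-/

open Matrix Polynomial

noncomputable def distMatrix {V : Type*} (G : SimpleGraph V) (h : ℕ) : Matrix V V ℝ :=
  Matrix.of fun u v => if G.dist u v = h then (1 : ℝ) else 0

theorem Matrix.aeval_apply_eq_leadingCoeff_mul {n R : Type*} [Fintype n] [DecidableEq n]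
    [CommSemiring R] (M : Matrix n n R) (q : R[X]) {i j : n}
    (h : ∀ k < q.natDegree, (M ^ k) i j = 0) :
    aeval M q i j = q.leadingCoeff * (M ^ q.natDegree) i j := by
  rw [aeval_eq_sum_range, Matrix.sum_apply, Finset.sum_eq_single_of_mem q.natDegree (by simp)]
  · simp [Matrix.smul_apply]
  · intro k hk hne
    simp [h k (by grind)]

namespace SimpleGraph

variable {V : Type*} {G : SimpleGraph V}

theorem Reachable.exists_dist_eq_of_le {u v : V} (huv : G.Reachable u v) {m : ℕ}
    (hm : m ≤ G.dist u v) : ∃ w, G.dist u w = m := by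
  obtain ⟨p, hp⟩ := huv.exists_walk_length_eq_dist
  refine ⟨p.getVert m, ?_⟩
  have := length_eq_dist_of_subwalk hp (p.isSubwalk_take m)
  simpa [hp, hm] using this.symm

variable [Fintype V] [DecidableEq V] [DecidableRel G.Adj] {α : Type*} [Semiring α]

theorem adjMatrix_pow_apply_eq_zero_of_lt_dist {u v : V} {k : ℕ} (hk : k < G.dist u v) :
    (G.adjMatrix α ^ k) u v = 0 := by
  have : IsEmpty {p : G.Walk u v | p.length = k} := ⟨fun ⟨p, hp⟩ => (hp ▸ dist_le p).not_gt hk⟩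
  rw [adjMatrix_pow_apply_eq_card_walk, Fintype.card_eq_zero, Nat.cast_zero]

theorem adjMatrix_pow_dist_apply_ne_zero [CharZero α] {u v : V} (huv : G.Reachable u v) :
    (G.adjMatrix α ^ G.dist u v) u v ≠ 0 := by
  obtain ⟨p, hp⟩ := huv.exists_walk_length_eq_dist
  rw [adjMatrix_pow_apply_eq_card_walk, Nat.cast_ne_zero, ← Nat.pos_iff_ne_zero,
    Fintype.card_pos_iff]
  exact ⟨⟨p, hp⟩⟩

end SimpleGraph

theorem stmt_9_general {V : Type*} [Fintype V] [DecidableEq V]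
    (G : SimpleGraph V) [DecidableRel G.Adj]
    (hconn : G.Connected)
    (D : ℕ) (hD2 : ∃ u v : V, G.dist u v = D)
    (h : ℕ)
    (q : Polynomial ℝ)
    (hq : distMatrix G h = Polynomial.aeval (G.adjMatrix ℝ) q)
    (hdeg : h < q.natDegree) :
    D < q.natDegree := by
  by_contra! hle
  obtain ⟨u, v, rfl⟩ := hD2
  obtain ⟨w, hw⟩ := (hconn u v).exists_dist_eq_of_le hle
  have hentry := congrFun₂ hq u w
  rw [aeval_apply_eq_leadingCoeff_mul _ _
    fun k hk => SimpleGraph.adjMatrix_pow_apply_eq_zero_of_lt_dist (hw ▸ hk)] at hentry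
  have hdist_ne : G.dist u w ≠ h := hw ▸ hdeg.ne'
  simp only [distMatrix, of_apply, hdist_ne, if_false] at hentry
  exact mul_ne_zero (leadingCoeff_ne_zero.2 (ne_zero_of_natDegree_gt hdeg))
    (hw ▸ SimpleGraph.adjMatrix_pow_dist_apply_ne_zero (hconn u w)) hentry.symm

/-- If `A_h = q_h(A)` with `deg q_h > h` (`h ≤ D`), then
`deg q_h > D`. -/
theorem stmt_9 {V : Type*} [Fintype V] [DecidableEq V]
    (G : SimpleGraph V) [DecidableRel G.Adj]
    (δ : ℕ) (hreg : G.IsRegularOfDegree δ) (hconn : G.Connected)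
    (D : ℕ) (hD1 : ∀ u v : V, G.dist u v ≤ D) (hD2 : ∃ u v : V, G.dist u v = D)
    (h : ℕ) (hh : h ≤ D)
    (q : Polynomial ℝ)
    (hq : distMatrix G h = Polynomial.aeval (G.adjMatrix ℝ) q)
    (hdeg : h < q.natDegree) :
    D < q.natDegree :=
  stmt_9_general G hconn D hD2 h q hq hdeg
end

section
/- Let Γ be a connected δ-regular graph with diameter D equal to d (where d+1 is the number of distinct eigenvalues). If Γ is (D-1)-partially distance-regular (i.e., A_h = p_h(A) for all h ≤ D-1, where p_h are the predistance polynomials), then Γ is distance-regular, i.e., A_h = p_h(A) for all h ≤ D. -/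
/-!
Summing the predistance polynomials gives the Hoffman polynomial `H = p₀ + ⋯ + p_d`: by the
orthogonality relations, `H` vanishes at every eigenvalue `λ_k` with `k ≠ 0` and takes the value
`n / m₀` at `λ₀ = δ`. For a connected `δ`-regular graph the `δ`-eigenvectors are constant, so the
spectral decomposition of `A` gives `H(A) = J`. Since also `A₀ + ⋯ + A_D = J`, and `A_h = p_h(A)`
for `h < D = d`, subtracting yields `A_D = p_D(A)`.
-/

open Matrix Polynomial Finset

/-- `∑ i, f i` is the expansion of `(w k₀)⁻¹ • Pi.single k₀ 1` in the orthogonal basis `f`. -/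
theorem sum_eq_ite_of_orthogonal {ι : Type*} [Fintype ι] [DecidableEq ι]
    (f : ι → ι → ℝ) (w : ι → ℝ) (hw : ∀ k, 0 < w k) (k₀ : ι)
    (horth : ∀ i j, ∑ k, w k * f i k * f j k = if i = j then f i k₀ else 0)
    (hne : ∀ i, ∃ k, f i k ≠ 0) (k : ι) :
    ∑ i, f i k = if k = k₀ then (w k₀)⁻¹ else 0 := by
  have hnorm_pos : ∀ i, 0 < f i k₀ := fun i => by
    obtain ⟨k, hk⟩ := hne i
    have hii := horth i i
    rw [if_pos rfl] at hii
    rw [← hii]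
    refine sum_pos' (fun k _ => ?_) ⟨k, mem_univ _, ?_⟩
    · rw [mul_assoc]; exact mul_nonneg (hw k).le (mul_self_nonneg _)
    · rw [mul_assoc]; exact mul_pos (hw k) (mul_self_pos.mpr hk)
  have hgram : of f * diagonal w * (of f)ᵀ = diagonal fun i => f i k₀ := by
    ext i j
    rw [mul_apply, diagonal_apply, ← horth i j]
    exact sum_congr rfl fun k _ => by simp only [mul_diagonal, transpose_apply, of_apply]; ring
  have hdet : (of f).det ≠ 0 := by
    intro h
    have := congrArg det hgram
    rw [det_mul, det_mul, h, zero_mul, zero_mul, det_diagonal] at this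
    exact (prod_pos fun i _ => hnorm_pos i).ne this
  set y : ι → ℝ := fun k => w k * ∑ i, f i k - if k = k₀ then 1 else 0
  have hy : of f *ᵥ y = 0 := by
    funext i
    have hsum : ∑ k, f i k * (w k * ∑ j, f j k) = f i k₀ := by
      simp_rw [mul_sum]
      rw [sum_comm]
      simp_rw [← mul_assoc, mul_comm (f i _) (w _), horth]
      simp
    simp [y, mulVec, dotProduct, mul_sub, sum_sub_distrib, hsum]
  have hyk : w k * ∑ i, f i k = if k = k₀ then 1 else 0 :=
    sub_eq_zero.mp (congrFun (eq_zero_of_mulVec_eq_zero hdet hy) k)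
  split_ifs at hyk ⊢ with hk
  · subst hk; exact eq_inv_of_mul_eq_one_right hyk
  · exact (mul_eq_zero.mp hyk).resolve_left (hw k).ne'

theorem Polynomial.eval_sum_eq_ite_of_orthogonal {d : ℕ} {lam : Fin (d + 1) → ℝ}
    (hlam : Function.Injective lam) {w : Fin (d + 1) → ℝ} (hw : ∀ k, 0 < w k) {p : ℕ → ℝ[X]}
    (hp : ∀ i ≤ d, p i ≠ 0) (hdeg : ∀ i ≤ d, (p i).natDegree ≤ d)
    (horth : ∀ i ≤ d, ∀ j ≤ d,
      ∑ k, w k * (p i).eval (lam k) * (p j).eval (lam k) = if i = j then (p i).eval (lam 0) else 0)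
    (k : Fin (d + 1)) :
    (∑ j ∈ range (d + 1), p j).eval (lam k) = if k = 0 then (w 0)⁻¹ else 0 := by
  have hne : ∀ i : Fin (d + 1), ∃ k, (p i).eval (lam k) ≠ 0 := by
    intro i
    by_contra! h
    refine hp i i.is_le (eq_zero_of_natDegree_lt_card_of_eval_eq_zero _ hlam h ?_)
    rw [Fintype.card_fin]
    exact Nat.lt_succ_of_le (hdeg i i.is_le)
  have := sum_eq_ite_of_orthogonal (fun i k : Fin (d + 1) => (p i).eval (lam k)) w hw 0
    (fun i j => by simpa only [Fin.val_inj] using horth i i.is_le j j.is_le) hne k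
  rwa [eval_finsetSum, ← Fin.sum_univ_eq_sum_range (fun j => (p j).eval (lam k))]

theorem Polynomial.eq_one_of_natDegree_eq_zero_of_aeval_eq_one {V : Type*} [Fintype V]
    [DecidableEq V] [Nonempty V] {M : Matrix V V ℝ} {q : ℝ[X]} (hq : q.natDegree = 0)
    (hM : aeval M q = 1) : q = 1 := by
  obtain ⟨c, rfl⟩ := natDegree_eq_zero.mp hq
  rw [aeval_C, ← map_one (algebraMap ℝ (Matrix V V ℝ))] at hM
  rw [FaithfulSMul.algebraMap_injective ℝ (Matrix V V ℝ) hM, C_1]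

namespace Matrix.IsHermitian

variable {V : Type*} [Fintype V] [DecidableEq V] {A : Matrix V V ℝ} (hA : A.IsHermitian)

theorem aeval_eq_conj_diagonal (q : ℝ[X]) :
    aeval A q = (hA.eigenvectorUnitary : Matrix V V ℝ) *
      diagonal (fun i => q.eval (hA.eigenvalues i)) *
        star (hA.eigenvectorUnitary : Matrix V V ℝ) := by
  rw [← cfc_polynomial q A hA.isSelfAdjoint, hA.cfc_eq, IsHermitian.cfc]
  rfl

theorem exists_eigenvalues_eq_of_charpoly_eq {ι : Type*} [Fintype ι] (lam : ι → ℝ) (m : ι → ℕ)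
    (hchar : A.charpoly = ∏ k, (X - C (lam k)) ^ m k) (i : V) :
    ∃ k, hA.eigenvalues i = lam k := by
  have hroot : (∏ k, (X - C (lam k)) ^ m k).eval (hA.eigenvalues i) = 0 := by
    rw [← hchar, hA.charpoly_eq, eval_prod]
    exact prod_eq_zero (mem_univ i) (by simp)
  rw [eval_prod] at hroot
  obtain ⟨k, -, hk⟩ := prod_eq_zero_iff.mp hroot
  rw [eval_pow, eval_sub, eval_X, eval_C] at hk
  exact ⟨k, sub_eq_zero.mp (pow_eq_zero_iff'.mp hk).1⟩

theorem card_eigenvalues_eq_of_charpoly_eq {ι : Type*} [Fintype ι] {lam : ι → ℝ}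
    (hlam : Function.Injective lam) (m : ι → ℕ)
    (hchar : A.charpoly = ∏ k, (X - C (lam k)) ^ m k) (k : ι) :
    #{i | hA.eigenvalues i = lam k} = m k := by
  classical
  have hroots := hA.roots_charpoly_eq_eigenvalues
  rw [hchar, roots_prod _ _ (by simp [prod_ne_zero_iff, X_sub_C_ne_zero])] at hroots
  have hcount := congrArg (Multiset.count (lam k)) hroots
  simp only [Multiset.count_bind, roots_pow, roots_X_sub_C, Multiset.count_nsmul,
    Multiset.count_singleton, Multiset.count_map, hlam.eq_iff, mul_ite, mul_one,
    mul_zero] at hcount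
  simpa [card_def, eq_comm] using hcount.symm

end Matrix.IsHermitian

namespace SimpleGraph.IsRegularOfDegree

variable {V : Type*} [Fintype V] [DecidableEq V] {G : SimpleGraph V} [DecidableRel G.Adj] {δ : ℕ}

theorem apply_eq_of_adjMatrix_mulVec_eq_smul (hreg : G.IsRegularOfDegree δ)
    (hconn : G.Preconnected) {x : V → ℝ} (hx : G.adjMatrix ℝ *ᵥ x = (δ : ℝ) • x) (u v : V) :
    x u = x v := by
  have hlap : G.lapMatrix ℝ *ᵥ x = 0 := by
    funext w
    have := congrFun hx w
    rw [adjMatrix_mulVec_apply] at this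
    simp [lapMatrix_mulVec_apply, hreg w, this]
  exact G.lapMatrix_mulVec_eq_zero_iff_forall_reachable.mp hlap u v (hconn u v)

theorem eigenvectorBasis_mul_eigenvectorBasis_eq_inv_card (hreg : G.IsRegularOfDegree δ)
    (hconn : G.Preconnected) {i : V} (hi : (G.isHermitian_adjMatrix ℝ).eigenvalues i = δ)
    (u v : V) :
    (G.isHermitian_adjMatrix ℝ).eigenvectorBasis i u *
      (G.isHermitian_adjMatrix ℝ).eigenvectorBasis i v = (Fintype.card V : ℝ)⁻¹ := by
  set x : V → ℝ := ⇑((G.isHermitian_adjMatrix ℝ).eigenvectorBasis i)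
  have hx : G.adjMatrix ℝ *ᵥ x = (δ : ℝ) • x := by
    rw [← hi]
    exact (G.isHermitian_adjMatrix ℝ).mulVec_eigenvectorBasis i
  have hconst := hreg.apply_eq_of_adjMatrix_mulVec_eq_smul hconn hx
  have hunit : ∑ w, x w * x w = 1 := by
    simpa [mul_apply, one_apply] using congrFun (congrFun
      (Unitary.coe_star_mul_self (G.isHermitian_adjMatrix ℝ).eigenvectorUnitary) i) i
  simp only [hconst _ u, sum_const, card_univ, nsmul_eq_mul] at hunit
  change x u * x v = _
  rw [hconst v u, eq_inv_of_mul_eq_one_right hunit]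

theorem aeval_adjMatrix_eq_of_eval_eigenvalues (hreg : G.IsRegularOfDegree δ)
    (hconn : G.Preconnected) {ι : Type*} [Fintype ι] [DecidableEq ι] {lam : ι → ℝ}
    (hlam : Function.Injective lam) {k₀ : ι} (hlam₀ : lam k₀ = δ) {m : ι → ℕ} (hm₀ : m k₀ ≠ 0)
    (hchar : (G.adjMatrix ℝ).charpoly = ∏ k, (X - C (lam k)) ^ m k) {q : ℝ[X]}
    (hq : ∀ k, q.eval (lam k) = if k = k₀ then (Fintype.card V : ℝ) / m k₀ else 0) :
    aeval (G.adjMatrix ℝ) q = of fun _ _ => 1 := by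
  set hA := G.isHermitian_adjMatrix ℝ
  ext u v
  have hn : (Fintype.card V : ℝ) ≠ 0 := by
    have : Nonempty V := ⟨u⟩
    exact_mod_cast Fintype.card_ne_zero
  have hterm : ∀ i, hA.eigenvectorBasis i u * q.eval (hA.eigenvalues i) *
      hA.eigenvectorBasis i v = if hA.eigenvalues i = lam k₀ then ((m k₀ : ℝ))⁻¹ else 0 := by
    intro i
    obtain ⟨k, hk⟩ := hA.exists_eigenvalues_eq_of_charpoly_eq lam m hchar i
    by_cases hk₀ : k = k₀
    · subst hk₀
      rw [if_pos hk, hk, hq, if_pos rfl, mul_right_comm,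
        hreg.eigenvectorBasis_mul_eigenvectorBasis_eq_inv_card hconn (hk.trans hlam₀)]
      field_simp
    · rw [if_neg (hk ▸ hlam.ne hk₀), hk, hq, if_neg hk₀, mul_zero, zero_mul]
  rw [hA.aeval_eq_conj_diagonal, mul_apply]
  simp only [mul_diagonal, star_apply, star_trivial, IsHermitian.eigenvectorUnitary_apply, hterm]
  rw [sum_ite, sum_const_zero, add_zero, sum_const, nsmul_eq_mul,
    hA.card_eigenvalues_eq_of_charpoly_eq hlam m hchar, of_apply]
  exact mul_inv_cancel₀ (by exact_mod_cast hm₀)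

end SimpleGraph.IsRegularOfDegree

section distMatrix

variable {V : Type*} {G : SimpleGraph V}

theorem distMatrix_zero [DecidableEq V] (hconn : G.Connected) : distMatrix G 0 = 1 := by
  ext u v
  simp [distMatrix, one_apply, hconn.dist_eq_zero_iff]

theorem sum_distMatrix_eq_of_forall_dist_le [Fintype V] {D : ℕ} (hD : ∀ u v, G.dist u v ≤ D) :
    ∑ h ∈ range (D + 1), distMatrix G h = of fun _ _ => 1 := by
  ext u v
  simp [distMatrix, Matrix.sum_apply, Nat.lt_succ_of_le (hD u v)]

end distMatrix

theorem stmt_15_general {V : Type*} [Fintype V] [DecidableEq V]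
    (G : SimpleGraph V) [DecidableRel G.Adj]
    (δ : ℕ) (hreg : G.IsRegularOfDegree δ) (hconn : G.Connected)
    (D : ℕ) (hD1 : ∀ u v : V, G.dist u v ≤ D)
    (d : ℕ) (hDd : D = d)
    (lam : Fin (d + 1) → ℝ) (hlam : StrictAnti lam) (hlam0 : lam 0 = δ)
    (m : Fin (d + 1) → ℕ) (hmpos : ∀ i, 0 < m i)
    (hchar : Matrix.charpoly (G.adjMatrix ℝ) =
      ∏ i, (Polynomial.X - Polynomial.C (lam i)) ^ (m i))
    (n : ℕ) (hn : n = Fintype.card V)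
    (p : ℕ → Polynomial ℝ)
    (hdeg : ∀ i ≤ d, (p i).natDegree = i)
    (horth : ∀ i ≤ d, ∀ j ≤ d,
      (1 / (n : ℝ)) * ∑ k, (m k : ℝ) * (p i).eval (lam k) * (p j).eval (lam k) =
        if i = j then (p i).eval (lam 0) else 0)
    (hpart : ∀ h ≤ D - 1, distMatrix G h = Polynomial.aeval (G.adjMatrix ℝ) (p h)) :
    ∀ h ≤ D, distMatrix G h = Polynomial.aeval (G.adjMatrix ℝ) (p h) := by
  subst hDd hn
  rcases isEmpty_or_nonempty V with hV | hV
  · exact fun _ _ => Subsingleton.elim _ _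
  have hp₀ : p 0 = 1 := eq_one_of_natDegree_eq_zero_of_aeval_eq_one (hdeg 0 D.zero_le)
    ((hpart 0 (Nat.zero_le _)).symm.trans (distMatrix_zero hconn))
  have hH : ∀ k, (∑ j ∈ range (D + 1), p j).eval (lam k) =
      if k = 0 then (Fintype.card V : ℝ) / m 0 else 0 := by
    intro k
    rw [eval_sum_eq_ite_of_orthogonal hlam.injective (w := fun k => (m k : ℝ) / Fintype.card V)
      (fun k => by have := hmpos k; positivity) _ (fun i hi => (hdeg i hi).trans_le hi) _ k,
      inv_div]
    · rintro (_ | i) hi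
      · rw [hp₀]; exact one_ne_zero
      · exact ne_zero_of_natDegree_gt (n := 0) (by rw [hdeg _ hi]; exact i.succ_pos)
    · intro i hi j hj
      rw [← horth i hi j hj, mul_sum]
      exact sum_congr rfl fun k _ => by ring
  have hJ := hreg.aeval_adjMatrix_eq_of_eval_eigenvalues hconn.preconnected hlam.injective hlam0
    (hmpos 0).ne' hchar hH
  intro h hh
  rcases hh.lt_or_eq with hlt | rfl
  · exact hpart h (by omega)
  have hsum := sum_distMatrix_eq_of_forall_dist_le hD1
  rw [← hJ, map_sum, sum_range_succ, sum_range_succ,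
    sum_congr rfl fun j hj => hpart j (by rw [mem_range] at hj; omega)] at hsum
  exact add_left_cancel hsum

/-- Let `Γ` be a connected `δ`-regular graph with spectrally maximum
diameter `D = d`. If `Γ` is `(D-1)`-partially distance-regular (`A_h = p_h(A)` for all
`h ≤ D - 1`), then `Γ` is distance-regular (`A_h = p_h(A)` for all `h ≤ D`). -/
theorem stmt_15 {V : Type*} [Fintype V] [DecidableEq V]
    (G : SimpleGraph V) [DecidableRel G.Adj]
    (δ : ℕ) (hreg : G.IsRegularOfDegree δ) (hconn : G.Connected)
    (D : ℕ) (hD1 : ∀ u v : V, G.dist u v ≤ D) (hD2 : ∃ u v : V, G.dist u v = D)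
    (d : ℕ) (hDd : D = d)
    (lam : Fin (d + 1) → ℝ) (hlam : StrictAnti lam) (hlam0 : lam 0 = δ)
    (m : Fin (d + 1) → ℕ) (hmpos : ∀ i, 0 < m i)
    (hchar : Matrix.charpoly (G.adjMatrix ℝ) =
      ∏ i, (Polynomial.X - Polynomial.C (lam i)) ^ (m i))
    (n : ℕ) (hn : n = Fintype.card V)
    (p : ℕ → Polynomial ℝ)
    (hdeg : ∀ i ≤ d, (p i).natDegree = i)
    (horth : ∀ i ≤ d, ∀ j ≤ d,
      (1 / (n : ℝ)) * ∑ k, (m k : ℝ) * (p i).eval (lam k) * (p j).eval (lam k) =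
        if i = j then (p i).eval (lam 0) else 0)
    (hpart : ∀ h ≤ D - 1, distMatrix G h = Polynomial.aeval (G.adjMatrix ℝ) (p h)) :
    ∀ h ≤ D, distMatrix G h = Polynomial.aeval (G.adjMatrix ℝ) (p h) :=
  stmt_15_general G δ hreg hconn D hD1 d hDd lam hlam hlam0 m hmpos hchar n hn p hdeg horth hpart
end

section
/- Let Γ be a connected δ-regular graph on n vertices with diameter D = d. Then for every pair of vertices u,v at distance d and every eigenvalue index i, the crossed local multiplicity is m_{uv}(λ_i) = (E_i)_{uv} = (−1)^i π_0/(n π_i), where π_i = Π_{j≠i} |λ_i − λ_j|; in particular it is independent of the choice of u,v at distance d. -/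
/-!
Evaluate the nodal polynomial `p = ∏_{j ≠ i} (X - λⱼ)` at `A` in two ways. Spectrally,
`p(A) = ∑ₖ p(λₖ) Eₖ = p(λᵢ) Eᵢ`, and `p(λᵢ) = (-1)^i πᵢ` because exactly `i` of the `λⱼ`
exceed `λᵢ`. Combinatorially, `p` is monic of degree `d` and `(A^m)_{uv} = 0` for `m < d`,
so `p(A)_{uv} = (A^d)_{uv} = π₀/n`.
-/

open Finset Matrix Polynomial

namespace Matrix

variable {ι n R : Type*} [Fintype ι] [DecidableEq ι] [Fintype n] [DecidableEq n] [CommRing R]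
  {A : Matrix n n R} {E : ι → Matrix n n R} {lam : ι → R}

theorem pow_eq_sum_pow_smul_of_spectral (hA : A = ∑ k, lam k • E k)
    (hEE : ∀ i j, E i * E j = if i = j then E i else 0) (hsum : ∑ k, E k = 1) (m : ℕ) :
    A ^ m = ∑ k, lam k ^ m • E k := by
  induction m with
  | zero => simp [hsum]
  | succ m ih =>
    rw [pow_succ, ih, hA, sum_mul_sum]
    refine sum_congr rfl fun k _ => ?_
    simp only [smul_mul_smul_comm, hEE, smul_ite, smul_zero, sum_ite_eq, mem_univ, if_true,
      pow_succ]

theorem aeval_eq_sum_eval_smul_of_spectral (hA : A = ∑ k, lam k • E k)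
    (hEE : ∀ i j, E i * E j = if i = j then E i else 0) (hsum : ∑ k, E k = 1) (p : R[X]) :
    aeval A p = ∑ k, p.eval (lam k) • E k := by
  simp_rw [aeval_eq_sum_range, pow_eq_sum_pow_smul_of_spectral hA hEE hsum, smul_sum, smul_smul,
    eval_eq_sum_range, sum_smul]
  exact sum_comm

theorem aeval_apply_eq_pow_natDegree_apply {M : Matrix n n R} {p : R[X]} (hp : p.Monic)
    {u v : n} (h : ∀ m < p.natDegree, (M ^ m) u v = 0) :
    aeval M p u v = (M ^ p.natDegree) u v := by
  rw [aeval_eq_sum_range, sum_range_succ, add_apply, sum_apply, sum_eq_zero fun m hm => ?_]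
  · simp [hp.coeff_natDegree]
  · simp [h m (mem_range.1 hm)]

end Matrix

theorem SimpleGraph.adjMatrix_pow_apply_eq_zero_of_lt_dist_s17 {V R : Type*} [Fintype V]
    [DecidableEq V] [Semiring R] (G : SimpleGraph V) [DecidableRel G.Adj] {u v : V} {m : ℕ}
    (hm : m < G.dist u v) : (G.adjMatrix R ^ m) u v = 0 := by
  have : IsEmpty { p : G.Walk u v | p.length = m } :=
    ⟨fun ⟨p, hp⟩ => (G.dist_le p).not_gt (hp ▸ hm)⟩
  rw [adjMatrix_pow_apply_eq_card_walk, Fintype.card_eq_zero, Nat.cast_zero]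

theorem prod_erase_sub_eq_neg_one_pow_mul_prod_abs {R : Type*} [CommRing R] [LinearOrder R]
    [IsStrictOrderedRing R] {d : ℕ} {lam : Fin d → R} (hlam : StrictAnti lam) (i : Fin d) :
    ∏ j ∈ univ.erase i, (lam i - lam j) =
      (-1) ^ (i : ℕ) * ∏ j ∈ univ.erase i, |lam i - lam j| := by
  have hsign : ∀ j ∈ univ.erase i,
      lam i - lam j = (if j < i then -1 else 1) * |lam i - lam j| := by
    intro j hj
    rcases lt_or_gt_of_ne (ne_of_mem_erase hj) with h | h
    · rw [if_pos h, abs_of_neg (sub_neg.2 (hlam h))]; ring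
    · rw [if_neg h.not_gt, abs_of_pos (sub_pos.2 (hlam h))]; ring
  have hbelow : (univ.erase i).filter (· < i) = Iio i := by
    ext j; simpa using fun h : j < i => h.ne
  rw [prod_congr rfl hsign, prod_mul_distrib, prod_ite, hbelow]
  simp

theorem stmt_17_general {V : Type*} [Fintype V] [DecidableEq V]
    (G : SimpleGraph V) [DecidableRel G.Adj]
    (d : ℕ)
    (lam : Fin (d + 1) → ℝ) (hlam : StrictAnti lam)
    (E : Fin (d + 1) → Matrix V V ℝ)
    (hA : G.adjMatrix ℝ = ∑ i, lam i • E i)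
    (hEE : ∀ i j, E i * E j = if i = j then E i else 0)
    (hsum : ∑ i, E i = 1)
    (n : ℕ)
    (π : Fin (d + 1) → ℝ)
    (hπ : ∀ i, π i = ∏ j ∈ Finset.univ.erase i, |lam i - lam j|)
    (hwalks : ∀ u v : V, G.dist u v = d →
      ((G.adjMatrix ℝ) ^ d) u v = π 0 / (n : ℝ)) :
    ∀ (i : Fin (d + 1)) (u v : V), G.dist u v = d →
      E i u v = (-1) ^ (i : ℕ) * π 0 / ((n : ℝ) * π i) := by
  intro i u v huv
  set p := Lagrange.nodal (univ.erase i) lam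
  have hdeg : p.natDegree = d := by simp [p, Lagrange.natDegree_nodal]
  have hspectral : aeval (G.adjMatrix ℝ) p u v = p.eval (lam i) * E i u v := by
    rw [aeval_eq_sum_eval_smul_of_spectral hA hEE hsum, Matrix.sum_apply,
      sum_eq_single i (fun k _ hk => ?_) (by simp)]
    · rfl
    · simp [p, Lagrange.eval_nodal_at_node (mem_erase.2 ⟨hk, mem_univ k⟩)]
  have hwalk : aeval (G.adjMatrix ℝ) p u v = π 0 / n := by
    rw [aeval_apply_eq_pow_natDegree_apply Lagrange.nodal_monic, hdeg, hwalks u v huv]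
    exact fun m hm => G.adjMatrix_pow_apply_eq_zero_of_lt_dist_s17 (huv ▸ hdeg ▸ hm)
  have heval : p.eval (lam i) = (-1) ^ (i : ℕ) * π i := by
    rw [Lagrange.eval_nodal, prod_erase_sub_eq_neg_one_pow_mul_prod_abs hlam, hπ]
  have hπi : π i ≠ 0 := by
    rw [hπ]
    exact prod_ne_zero_iff.2 fun j hj =>
      abs_ne_zero.2 (sub_ne_zero.2 (hlam.injective.ne (ne_of_mem_erase hj).symm))
  have hkey : (-1) ^ (i : ℕ) * π i * E i u v = π 0 / n := heval ▸ hspectral ▸ hwalk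
  rw [eq_div_of_mul_eq (mul_ne_zero (pow_ne_zero _ (neg_ne_zero.2 one_ne_zero)) hπi)
    ((mul_comm _ _).trans hkey)]
  rcases neg_one_pow_eq_or ℝ (i : ℕ) with h | h <;> rw [h] <;> ring

/-- Let `Γ` be a connected `δ`-regular graph on `n` vertices with
spectrally maximum diameter `D = d`. Then for vertices `u, v` at distance `d`, the
crossed local multiplicities are `m_{uv}(λᵢ) = (Eᵢ)_{uv} = (−1)^i π₀/(n πᵢ)`, where
`πᵢ = ∏_{j≠i} |λᵢ − λⱼ|`; in particular they do not depend on the choice of `u, v`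
at distance `d`. -/
theorem stmt_17 {V : Type*} [Fintype V] [DecidableEq V]
    (G : SimpleGraph V) [DecidableRel G.Adj]
    (δ : ℕ) (hreg : G.IsRegularOfDegree δ) (hconn : G.Connected)
    (D : ℕ) (hD1 : ∀ u v : V, G.dist u v ≤ D) (hD2 : ∃ u v : V, G.dist u v = D)
    (d : ℕ) (hDd : D = d)
    (lam : Fin (d + 1) → ℝ) (hlam : StrictAnti lam) (hlam0 : lam 0 = δ)
    (E : Fin (d + 1) → Matrix V V ℝ)
    (hA : G.adjMatrix ℝ = ∑ i, lam i • E i)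
    (hEE : ∀ i j, E i * E j = if i = j then E i else 0)
    (hEsymm : ∀ i, (E i).IsSymm)
    (hsum : ∑ i, E i = 1)
    (n : ℕ) (hn : n = Fintype.card V)
    (π : Fin (d + 1) → ℝ)
    (hπ : ∀ i, π i = ∏ j ∈ Finset.univ.erase i, |lam i - lam j|)
    (hwalks : ∀ u v : V, G.dist u v = d →
      ((G.adjMatrix ℝ) ^ d) u v = π 0 / (n : ℝ)) :
    ∀ (i : Fin (d + 1)) (u v : V), G.dist u v = d →
      E i u v = (-1) ^ (i : ℕ) * π 0 / ((n : ℝ) * π i) :=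
  stmt_17_general G d lam hlam E hA hEE hsum n π hπ hwalks
end

section
/- Let Γ be a connected δ-regular graph with diameter D, predistance polynomials p_i, and let h ≤ D. If ⟨p_h(A), A_i⟩ = 0 for i = 0,...,h−1, then the average degree δ̄_h of the distance-h graph satisfies δ̄_h ≥ p_h(λ_0), with equality if and only if A_h = p_h(A). -/
open Matrix Polynomial

/-- The scalar product `⟨R,S⟩ = (1/n)·tr(RS)` on matrices. -/
noncomputable def matInner {V : Type*} [Fintype V] (R S : Matrix V V ℝ) : ℝ :=
  (1 / (Fintype.card V : ℝ)) * Matrix.trace (R * S)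

/-- The average degree `δ̄_h = (1/n)·sum(A_h)` of the distance-`h` graph. -/
noncomputable def avgDegree {V : Type*} [Fintype V] (G : SimpleGraph V) (h : ℕ) : ℝ :=
  (1 / (Fintype.card V : ℝ)) * ∑ u : V, ∑ v : V, distMatrix G h u v

section Aux

variable {V : Type*} [Fintype V] [DecidableEq V]

/-- Conjugation by a unitary matrix as an algebra hom. -/
noncomputable def conjAH (U : Matrix V V ℝ) (h1 : U * star U = 1) :
    Matrix V V ℝ →ₐ[ℝ] Matrix V V ℝ where
  toFun M := U * M * star U
  map_one' := by simpa using h1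
  map_mul' M N := by
    have h2 : star U * U = 1 := mul_eq_one_comm.mp h1
    show U * (M * N) * star U = U * M * star U * (U * N * star U)
    calc U * (M * N) * star U
        = U * M * (star U * U) * N * star U := by rw [h2, Matrix.mul_one]; noncomm_ring
      _ = U * M * star U * (U * N * star U) := by noncomm_ring
  map_zero' := by simp
  map_add' M N := by noncomm_ring
  commutes' r := by
    simp only [Algebra.algebraMap_eq_smul_one]
    rw [Matrix.mul_smul, Matrix.mul_one, Matrix.smul_mul, h1]

lemma aeval_unitary_conj (U : Matrix V V ℝ) (h1 : U * star U = 1) (e : V → ℝ) (q : ℝ[X]) :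
    aeval (U * diagonal e * star U) q = U * diagonal (fun i => q.eval (e i)) * star U := by
  have hd : U * diagonal e * star U = conjAH U h1
      ((diagonalAlgHom ℝ : (V → ℝ) →ₐ[ℝ] Matrix V V ℝ) e) := rfl
  rw [hd, aeval_algHom_apply, aeval_algHom_apply]
  have h3 : (aeval e q : V → ℝ) = fun i => q.eval (e i) := by
    funext i; exact aeval_fn_apply q e i
  rw [h3]
  rfl

variable {A : Matrix V V ℝ} (hA : A.IsHermitian)

lemma spectral_real :
    A = (hA.eigenvectorUnitary : Matrix V V ℝ) * diagonal hA.eigenvalues *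
      star (hA.eigenvectorUnitary : Matrix V V ℝ) := by
  have := hA.spectral_theorem
  simpa using this

lemma U_mul_star :
    (hA.eigenvectorUnitary : Matrix V V ℝ) * star (hA.eigenvectorUnitary : Matrix V V ℝ) = 1 :=
  Matrix.mem_unitaryGroup_iff.mp (hA.eigenvectorUnitary).2

lemma aeval_conj (q : ℝ[X]) :
    aeval A q = (hA.eigenvectorUnitary : Matrix V V ℝ) *
      diagonal (fun i => q.eval (hA.eigenvalues i)) *
      star (hA.eigenvectorUnitary : Matrix V V ℝ) := by
  conv_lhs => rw [spectral_real hA]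
  exact aeval_unitary_conj _ (U_mul_star hA) _ q

lemma trace_aeval (q : ℝ[X]) :
    (aeval A q).trace = ∑ i, q.eval (hA.eigenvalues i) := by
  rw [aeval_conj hA q, Matrix.trace_mul_cycle,
    mul_eq_one_comm.mp (U_mul_star hA), Matrix.one_mul, Matrix.trace_diagonal]

lemma aeval_eq_zero_of_roots (q : ℝ[X]) (hq : ∀ i, q.eval (hA.eigenvalues i) = 0) :
    aeval A q = 0 := by
  rw [aeval_conj hA q]
  have : (diagonal (fun i => q.eval (hA.eigenvalues i)) : Matrix V V ℝ) = 0 := by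
    rw [show (fun i => q.eval (hA.eigenvalues i)) = fun _ => (0:ℝ) from funext hq]
    simp
  rw [this, Matrix.mul_zero, Matrix.zero_mul]

lemma charmatrix_diagonal' (e : V → ℝ) :
    charmatrix (diagonal e) = diagonal (fun i => (X : ℝ[X]) - C (e i)) := by
  apply Matrix.ext; intro i j
  by_cases hij : i = j
  · subst hij; simp [charmatrix_apply_eq, Matrix.diagonal_apply_eq]
  · rw [charmatrix_apply_ne _ _ _ hij, Matrix.diagonal_apply_ne _ hij,
      Matrix.diagonal_apply_ne _ hij]
    simp

lemma charpoly_conj_diag (U : Matrix V V ℝ) (h1 : U * star U = 1) (e : V → ℝ) :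
    (U * diagonal e * star U).charpoly = ∏ i, (X - C (e i)) := by
  let φ : Matrix V V ℝ →+* Matrix V V ℝ[X] := (Polynomial.C (R := ℝ)).mapMatrix
  have key : charmatrix (U * diagonal e * star U) =
      φ U * charmatrix (diagonal e) * φ (star U) := by
    unfold charmatrix
    have hc : Matrix.scalar V (X : ℝ[X]) = φ U * Matrix.scalar V (X : ℝ[X]) * φ (star U) := by
      have comm : φ U * Matrix.scalar V (X : ℝ[X]) = Matrix.scalar V (X : ℝ[X]) * φ U :=
        (Matrix.scalar_commute (X : ℝ[X]) (fun r' => Commute.all _ _) (φ U)).symm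
      rw [comm, Matrix.mul_assoc, ← _root_.map_mul φ, h1, _root_.map_one φ, Matrix.mul_one]
    rw [Matrix.mul_sub, Matrix.sub_mul, ← hc, ← _root_.map_mul φ, ← _root_.map_mul φ]
  rw [Matrix.charpoly, key, Matrix.det_mul, Matrix.det_mul, mul_comm, ← mul_assoc,
    ← Matrix.det_mul, ← _root_.map_mul φ, mul_eq_one_comm.mp h1, _root_.map_one φ,
    Matrix.det_one, one_mul, charmatrix_diagonal', Matrix.det_diagonal]

lemma charpoly_eq_prod : A.charpoly = ∏ i, (X - C (hA.eigenvalues i)) := by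
  conv_lhs => rw [spectral_real hA]
  exact charpoly_conj_diag _ (U_mul_star hA) _

lemma trace_mul_entries (R S : Matrix V V ℝ) :
    (R * S).trace = ∑ u, ∑ v, R u v * S v u := by
  simp [Matrix.trace, Matrix.mul_apply, Matrix.diag]

lemma aeval_symm (hsA : Aᵀ = A) (q : ℝ[X]) : (aeval A q)ᵀ = aeval A q := by
  rw [aeval_eq_sum_range]
  rw [Matrix.transpose_sum]
  apply Finset.sum_congr rfl
  intro i _
  rw [Matrix.transpose_smul, Matrix.transpose_pow, hsA]

end Aux

section GraphAux

variable {V : Type*} [Fintype V] [DecidableEq V]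
variable (G : SimpleGraph V) [DecidableRel G.Adj]

lemma pow_apply_zero_of_lt_dist {i : ℕ} {u v : V} (hlt : i < G.dist u v) :
    (G.adjMatrix ℝ ^ i) u v = 0 := by
  rw [SimpleGraph.adjMatrix_pow_apply_eq_card_walk]
  haveI : IsEmpty { p : G.Walk u v | p.length = i } := by
    constructor
    rintro ⟨p, hp⟩
    exact absurd (SimpleGraph.dist_le p) (by simp only [Set.mem_setOf_eq] at hp; omega)
  rw [Fintype.card_eq_zero]
  norm_num

lemma pow_dist_pos (hconn : G.Connected) (u v : V) :
    (0:ℝ) < (G.adjMatrix ℝ ^ (G.dist u v)) u v := by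
  rw [SimpleGraph.adjMatrix_pow_apply_eq_card_walk]
  obtain ⟨p, hp⟩ := hconn.exists_walk_length_eq_dist u v
  have : Nonempty { q : G.Walk u v | q.length = G.dist u v } := ⟨⟨p, hp⟩⟩
  have := Fintype.card_pos (α := { q : G.Walk u v | q.length = G.dist u v })
  exact_mod_cast this

lemma aeval_apply_zero_of_deg_lt (q : ℝ[X]) {u v : V} (hq : q.natDegree < G.dist u v) :
    (aeval (G.adjMatrix ℝ) q) u v = 0 := by
  rw [aeval_eq_sum_range, Matrix.sum_apply]
  apply Finset.sum_eq_zero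
  intro i hi
  rw [Matrix.smul_apply, pow_apply_zero_of_lt_dist G (by
    simp only [Finset.mem_range] at hi; omega), smul_zero]

lemma walk_split {u v : V} (w : G.Walk u v) :
    ∀ j ≤ w.length, ∃ (x : V) (q : G.Walk u x) (r : G.Walk x v),
      q.length = j ∧ r.length = w.length - j := by
  induction w with
  | nil =>
      intro j hj
      simp only [SimpleGraph.Walk.length_nil, Nat.le_zero] at hj
      subst hj
      exact ⟨_, SimpleGraph.Walk.nil, SimpleGraph.Walk.nil, rfl, by simp⟩
  | @cons a b c hab w ih =>
      intro j hj
      match j with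
      | 0 => exact ⟨a, SimpleGraph.Walk.nil, SimpleGraph.Walk.cons hab w, rfl, by simp⟩
      | (j'+1) =>
          obtain ⟨x, q, r, hq, hr⟩ := ih j' (by simpa using hj)
          exact ⟨x, SimpleGraph.Walk.cons hab q, r, by simp [hq], by simpa using hr⟩

lemma exists_vertex_at_dist (hconn : G.Connected) {u v : V} {j : ℕ} (hj : j ≤ G.dist u v) :
    ∃ x, G.dist u x = j := by
  obtain ⟨w, hw⟩ := hconn.exists_walk_length_eq_dist u v
  obtain ⟨x, q, r, hq, hr⟩ := walk_split G w j (by omega)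
  have h1 : G.dist u x ≤ j := hq ▸ SimpleGraph.dist_le q
  have h2 : G.dist x v ≤ G.dist u v - j := by
    have := SimpleGraph.dist_le r; omega
  have h3 := hconn.dist_triangle (u := u) (v := x) (w := v)
  exact ⟨x, by omega⟩

lemma row_sum_pow (δ : ℕ) (hreg : G.IsRegularOfDegree δ) (k : ℕ) (u : V) :
    ∑ v, (G.adjMatrix ℝ ^ k) u v = (δ : ℝ) ^ k := by
  induction k generalizing u with
  | zero => simp [Matrix.one_apply]
  | succ k ih =>
      rw [pow_succ']
      have hrow : ∀ w : V, ∑ x, G.adjMatrix ℝ w x = (δ : ℝ) := by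
        intro w
        have := SimpleGraph.adjMatrix_mulVec_const_apply_of_regular (α := ℝ) (a := (1:ℝ))
          hreg (v := w)
        simpa [Matrix.mulVec, dotProduct] using this
      calc ∑ v, (G.adjMatrix ℝ * G.adjMatrix ℝ ^ k) u v
          = ∑ v, ∑ w, G.adjMatrix ℝ u w * (G.adjMatrix ℝ ^ k) w v := by
            simp [Matrix.mul_apply]
        _ = ∑ w, G.adjMatrix ℝ u w * ∑ v, (G.adjMatrix ℝ ^ k) w v := by
            rw [Finset.sum_comm]; simp [Finset.mul_sum]
        _ = ∑ w, G.adjMatrix ℝ u w * (δ : ℝ) ^ k := by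
            apply Finset.sum_congr rfl; intro w _; rw [ih]
        _ = (δ : ℝ) ^ (k + 1) := by
            rw [← Finset.sum_mul, hrow, pow_succ']

lemma row_sum_aeval (δ : ℕ) (hreg : G.IsRegularOfDegree δ) (q : ℝ[X]) (u : V) :
    ∑ v, (aeval (G.adjMatrix ℝ) q) u v = q.eval (δ : ℝ) := by
  rw [aeval_eq_sum_range (p := q) (G.adjMatrix ℝ), eval_eq_sum_range]
  have hv : ∀ v, (∑ i ∈ Finset.range (q.natDegree+1), q.coeff i • G.adjMatrix ℝ ^ i) u v
      = ∑ i ∈ Finset.range (q.natDegree+1), q.coeff i * (G.adjMatrix ℝ ^ i) u v := by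
    intro v; rw [Matrix.sum_apply]; simp [Matrix.smul_apply]
  simp only [hv]
  rw [Finset.sum_comm]
  apply Finset.sum_congr rfl
  intro i _
  rw [← Finset.mul_sum, row_sum_pow G δ hreg i u]

end GraphAux

/-- Let `h ≤ D`. If `⟨p_h(A), Aᵢ⟩ = 0` for `i = 0, ..., h-1`, then
the average degree of the distance-`h` graph satisfies `δ̄_h ≥ p_h(λ₀)`, with equality
if and only if `A_h = p_h(A)`. -/
theorem stmt_19 {V : Type*} [Fintype V] [DecidableEq V]
    (G : SimpleGraph V) [DecidableRel G.Adj]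
    (δ : ℕ) (hreg : G.IsRegularOfDegree δ) (hconn : G.Connected)
    (D : ℕ) (hD1 : ∀ u v : V, G.dist u v ≤ D) (hD2 : ∃ u v : V, G.dist u v = D)
    (d : ℕ) (lam : Fin (d + 1) → ℝ) (hlam : StrictAnti lam) (hlam0 : lam 0 = δ)
    (m : Fin (d + 1) → ℕ) (hmpos : ∀ i, 0 < m i)
    (hchar : Matrix.charpoly (G.adjMatrix ℝ) =
      ∏ i, (Polynomial.X - Polynomial.C (lam i)) ^ (m i))
    (n : ℕ) (hn : n = Fintype.card V)
    (p : ℕ → Polynomial ℝ)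
    (hdeg : ∀ i ≤ d, (p i).natDegree = i)
    (horth : ∀ i ≤ d, ∀ j ≤ d,
      (1 / (n : ℝ)) * ∑ k, (m k : ℝ) * (p i).eval (lam k) * (p j).eval (lam k) =
        if i = j then (p i).eval (lam 0) else 0)
    (h : ℕ) (hh : h ≤ D)
    (hperp : ∀ i, i < h →
      matInner (Polynomial.aeval (G.adjMatrix ℝ) (p h)) (distMatrix G i) = 0) :
    (p h).eval (lam 0) ≤ avgDegree G h ∧
    (avgDegree G h = (p h).eval (lam 0) ↔
      distMatrix G h = Polynomial.aeval (G.adjMatrix ℝ) (p h)) := by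
  classical
  set A := G.adjMatrix ℝ with hAdef
  have hA : A.IsHermitian := by
    rw [Matrix.IsHermitian, Matrix.conjTranspose_eq_transpose_of_trivial]
    exact G.transpose_adjMatrix
  set e := hA.eigenvalues with he
  have hprodeq : (∏ i : V, (X - C (e i))) = ∏ k, (X - C (lam k)) ^ (m k) := by
    rw [← charpoly_eq_prod hA, hchar]
  have hne : (∏ k, (X - C (lam k)) ^ (m k)) ≠ 0 := by
    apply Finset.prod_ne_zero_iff.mpr
    intro k _
    exact pow_ne_zero _ (X_sub_C_ne_zero _)
  have hroots1 : (∏ i : V, (X - C (e i))).roots = Finset.univ.val.map e := by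
    rw [Finset.prod_eq_multiset_prod,
      show Multiset.map (fun i => X - C (e i)) Finset.univ.val =
        Multiset.map (fun a : ℝ => X - C a) (Multiset.map e Finset.univ.val) by
        rw [Multiset.map_map]; rfl,
      roots_multiset_prod_X_sub_C]
  have hroots2 : (∏ k, ((X - C (lam k)) ^ (m k))).roots =
      Finset.univ.val.bind (fun k => (m k) • ({lam k} : Multiset ℝ)) := by
    rw [Polynomial.roots_prod _ _ hne]
    congr 1
    funext k
    rw [Polynomial.roots_pow, Polynomial.roots_X_sub_C]
  have hmul : (Finset.univ.val.map e : Multiset ℝ) =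
      Finset.univ.val.bind (fun k => (m k) • ({lam k} : Multiset ℝ)) := by
    rw [← hroots1, hprodeq, hroots2]
  have htransfer : ∀ g : ℝ → ℝ, ∑ i : V, g (e i) = ∑ k, (m k : ℝ) * g (lam k) := by
    intro g
    have h1 : ∑ i : V, g (e i) = ((Finset.univ.val.map e).map g).sum := by
      rw [Finset.sum_eq_multiset_sum, Multiset.map_map]; rfl
    rw [h1, hmul, Multiset.map_bind, Multiset.sum_bind, Finset.sum_eq_multiset_sum]
    congr 1
    apply Multiset.map_congr rfl
    intro k _
    rw [Multiset.nsmul_singleton, Multiset.map_replicate, Multiset.sum_replicate, nsmul_eq_mul]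
  have hmem : ∀ i : V, ∃ k, e i = lam k := by
    intro i
    have h1 : e i ∈ Finset.univ.val.map e :=
      Multiset.mem_map_of_mem e (Finset.mem_val.mpr (Finset.mem_univ i))
    rw [hmul, Multiset.mem_bind] at h1
    obtain ⟨k, -, hk⟩ := h1
    rw [Multiset.nsmul_singleton] at hk
    exact ⟨k, Multiset.eq_of_mem_replicate hk⟩
  have hDd : D ≤ d := by
    by_contra hc
    push_neg at hc
    obtain ⟨u, v, huv⟩ := hD2
    obtain ⟨x, hx⟩ := exists_vertex_at_dist G hconn (u := u) (v := v) (j := d+1)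
      (by omega)
    set f : ℝ[X] := ∏ k, (X - C (lam k)) with hf
    have hfmonic : f.Monic := monic_prod_of_monic _ _ (fun k _ => monic_X_sub_C _)
    have hfdeg : f.natDegree = d + 1 := by
      rw [hf, Polynomial.natDegree_prod_of_monic _ _ (fun k _ => monic_X_sub_C _)]
      simp
    have hfA : aeval A f = 0 := by
      apply aeval_eq_zero_of_roots hA
      intro i
      obtain ⟨k, hk⟩ := hmem i
      rw [hf, Polynomial.eval_prod]
      apply Finset.prod_eq_zero (Finset.mem_univ k)
      simp only [Polynomial.eval_sub, Polynomial.eval_X, Polynomial.eval_C]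
      rw [← he, hk, sub_self]
    set g : ℝ[X] := X ^ (d+1) - f with hg
    have hgdeg : g.natDegree ≤ d := by
      by_cases hg0 : g = 0
      · simp [hg0]
      · have hdlt : g.degree < (X ^ (d+1) : ℝ[X]).degree := by
          apply Polynomial.degree_sub_lt
          · rw [Polynomial.degree_X_pow, Polynomial.degree_eq_natDegree hfmonic.ne_zero, hfdeg]
          · exact pow_ne_zero _ Polynomial.X_ne_zero
          · rw [Polynomial.leadingCoeff_X_pow, hfmonic.leadingCoeff]
        rw [Polynomial.degree_X_pow] at hdlt
        have := (Polynomial.natDegree_lt_iff_degree_lt hg0).mpr hdlt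
        omega
    have hApow : (A ^ (d+1)) = aeval A g := by
      rw [hg, map_sub, hfA, sub_zero, map_pow, aeval_X]
    have hzero : (A ^ (d+1)) u x = 0 := by
      rw [hApow]; exact aeval_apply_zero_of_deg_lt G g (by rw [hx]; omega)
    have hpos : (0:ℝ) < (A ^ (d+1)) u x := by
      have := pow_dist_pos G hconn u x
      rw [hx] at this
      exact this
    linarith
  have hhd : h ≤ d := le_trans hh hDd
  have hVne : Nonempty V := hconn.nonempty
  have hNpos : (0:ℝ) < (Fintype.card V : ℝ) := by exact_mod_cast Fintype.card_pos
  have hnN : (n : ℝ) = (Fintype.card V : ℝ) := by rw [hn]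
  set N : ℝ := (Fintype.card V : ℝ) with hNdef
  set P := aeval A (p h) with hP
  set Ah := distMatrix G h with hAhdef
  have hPT : Pᵀ = P := aeval_symm G.transpose_adjMatrix (p h)
  have hPsymm : ∀ u v : V, P v u = P u v := by
    intro u v
    conv_rhs => rw [← hPT]
    rfl
  have hdistsymm : ∀ (i : ℕ) (u v : V), distMatrix G i v u = distMatrix G i u v := by
    intro i u v
    simp only [distMatrix, Matrix.of_apply]
    rw [SimpleGraph.dist_comm]
  have hAhsymm : ∀ u v : V, Ah v u = Ah u v := fun u v => hdistsymm h u v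
  -- (a) ⟨P,P⟩ = p_h(λ₀)
  have hPP : matInner P P = (p h).eval (lam 0) := by
    have h1 : P * P = aeval A (p h * p h) := (map_mul _ _ _).symm
    rw [matInner, h1, trace_aeval hA]
    have h2 := htransfer (fun x => (p h).eval x * (p h).eval x)
    simp only [Polynomial.eval_mul] at h2 ⊢
    rw [h2]
    have h3 := horth h hhd h hhd
    rw [if_pos rfl, hnN] at h3
    rw [← h3, ← hNdef]
    congr 1
    apply Finset.sum_congr rfl
    intro k _
    ring
  -- (b) row sums
  have hrow : ∀ u : V, ∑ v, P u v = (p h).eval (lam 0) := by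
    intro u
    rw [hP, row_sum_aeval G δ hreg (p h) u, hlam0]
  have hdegph : (p h).natDegree = h := hdeg h hhd
  have hPzero : ∀ u v : V, h < G.dist u v → P u v = 0 := by
    intro u v hd'
    exact aeval_apply_zero_of_deg_lt G (p h) (by rw [hdegph]; omega)
  have hSi0 : ∀ i, i < h → ∑ u, ∑ v, P u v * distMatrix G i u v = 0 := by
    intro i hi
    have hp0 := hperp i hi
    rw [matInner, trace_mul_entries, ← hNdef] at hp0
    have h0 : ∑ u, ∑ v, P u v * distMatrix G i v u = 0 := by
      rcases mul_eq_zero.mp hp0 with h' | h'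
      · exfalso
        have : (1:ℝ)/N ≠ 0 := by positivity
        exact this h'
      · exact h'
    rw [← h0]
    apply Finset.sum_congr rfl
    intro u _
    apply Finset.sum_congr rfl
    intro v _
    rw [hdistsymm i u v]
  have hSih : ∀ i, h < i → ∑ u, ∑ v, P u v * distMatrix G i u v = 0 := by
    intro i hi
    apply Finset.sum_eq_zero
    intro u _
    apply Finset.sum_eq_zero
    intro v _
    by_cases hcase : G.dist u v = i
    · rw [hPzero u v (by omega)]; ring
    · simp [distMatrix, hcase]
  have hone : ∀ u v : V, ∑ i ∈ Finset.range (D+1), distMatrix G i u v = 1 := by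
    intro u v
    simp only [distMatrix, Matrix.of_apply]
    rw [Finset.sum_ite_eq (Finset.range (D+1)) (G.dist u v) (fun _ => (1:ℝ))]
    rw [if_pos (Finset.mem_range.mpr (by have := hD1 u v; omega))]
  have hsplit : ∑ u, ∑ v : V, P u v =
      ∑ i ∈ Finset.range (D+1), ∑ u, ∑ v, P u v * distMatrix G i u v := by
    calc ∑ u, ∑ v : V, P u v
        = ∑ u, ∑ v : V, ∑ i ∈ Finset.range (D+1), P u v * distMatrix G i u v := by
          apply Finset.sum_congr rfl
          intro u _
          apply Finset.sum_congr rfl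
          intro v _
          rw [← Finset.mul_sum, hone u v, mul_one]
      _ = ∑ u, ∑ i ∈ Finset.range (D+1), ∑ v, P u v * distMatrix G i u v := by
          apply Finset.sum_congr rfl
          intro u _
          exact Finset.sum_comm
      _ = ∑ i ∈ Finset.range (D+1), ∑ u, ∑ v, P u v * distMatrix G i u v :=
          Finset.sum_comm
  have htot : ∑ u, ∑ v : V, P u v = N * (p h).eval (lam 0) := by
    calc ∑ u, ∑ v : V, P u v = ∑ u : V, (p h).eval (lam 0) := by
          apply Finset.sum_congr rfl
          intro u _
          exact hrow u
      _ = N * (p h).eval (lam 0) := by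
          rw [Finset.sum_const, nsmul_eq_mul, Finset.card_univ]
  have hSh : ∑ u, ∑ v, P u v * Ah u v = N * (p h).eval (lam 0) := by
    have h2 : ∑ i ∈ Finset.range (D+1), (∑ u, ∑ v, P u v * distMatrix G i u v) =
        ∑ u, ∑ v, P u v * Ah u v := by
      rw [Finset.sum_eq_single h]
      · intro i _ hne'
        rcases lt_or_gt_of_ne hne' with hlt | hgt
        · exact hSi0 i hlt
        · exact hSih i hgt
      · intro habs
        exact absurd (Finset.mem_range.mpr (by omega)) habs
    rw [← h2, ← hsplit, htot]
  have hPAh : matInner P Ah = (p h).eval (lam 0) := by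
    rw [matInner, trace_mul_entries, ← hNdef]
    have heq : ∑ u, ∑ v, P u v * Ah v u = N * (p h).eval (lam 0) := by
      rw [← hSh]
      apply Finset.sum_congr rfl
      intro u _
      apply Finset.sum_congr rfl
      intro v _
      rw [hAhsymm u v]
    rw [heq]
    field_simp
  have hAhP : matInner Ah P = matInner P Ah := by
    rw [matInner, matInner, Matrix.trace_mul_comm]
  have hAhAh : matInner Ah Ah = avgDegree G h := by
    rw [matInner, trace_mul_entries, avgDegree, ← hNdef]
    congr 1
    apply Finset.sum_congr rfl
    intro u _
    apply Finset.sum_congr rfl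
    intro v _
    rw [hAhsymm u v]
    simp only [hAhdef, distMatrix, Matrix.of_apply]
    split_ifs <;> norm_num
  set M := Ah - P with hM
  have hMsymm : ∀ u v : V, M v u = M u v := by
    intro u v
    simp only [hM, Matrix.sub_apply, hAhsymm, hPsymm]
  have hMM : matInner M M = avgDegree G h - (p h).eval (lam 0) := by
    have hexp : M * M = Ah * Ah - Ah * P - P * Ah + P * P := by
      rw [hM]; noncomm_ring
    have : matInner M M = matInner Ah Ah - matInner Ah P - matInner P Ah + matInner P P := by
      simp only [matInner, hexp, Matrix.trace_add, Matrix.trace_sub]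
      ring
    rw [this, hAhAh, hAhP, hPAh, hPP]
    ring
  have hMM2 : matInner M M = (1/N) * ∑ u, ∑ v, (M u v)^2 := by
    rw [matInner, trace_mul_entries, ← hNdef]
    congr 1
    apply Finset.sum_congr rfl
    intro u _
    apply Finset.sum_congr rfl
    intro v _
    rw [hMsymm u v, sq]
  have hsumsq : (0:ℝ) ≤ ∑ u, ∑ v : V, (M u v)^2 := by positivity
  have hkey : avgDegree G h - (p h).eval (lam 0) = (1/N) * ∑ u, ∑ v, (M u v)^2 := by
    rw [← hMM2, hMM]
  constructor
  · have : (0:ℝ) ≤ (1/N) * ∑ u, ∑ v, (M u v)^2 := by positivity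
    linarith
  · constructor
    · intro heq
      have hS0 : ∑ u, ∑ v : V, (M u v)^2 = 0 := by
        have h0 : (1/N) * ∑ u, ∑ v, (M u v)^2 = 0 := by
          rw [← hkey, heq]; ring
        rcases mul_eq_zero.mp h0 with h' | h'
        · exfalso
          have : (1:ℝ)/N ≠ 0 := by positivity
          exact this h'
        · exact h'
      have hent : ∀ u v : V, M u v = 0 := by
        intro u v
        have hrow0 : ∀ u ∈ Finset.univ, (0:ℝ) ≤ ∑ v, (M u v)^2 := by
          intro u _; positivity
        have h1 := (Finset.sum_eq_zero_iff_of_nonneg hrow0).mp hS0 u (Finset.mem_univ u)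
        have hterm : ∀ v ∈ Finset.univ, (0:ℝ) ≤ (M u v)^2 := by
          intro v _; positivity
        have h2 := (Finset.sum_eq_zero_iff_of_nonneg hterm).mp h1 v (Finset.mem_univ v)
        exact pow_eq_zero_iff (by norm_num) |>.mp h2
      have hM0 : M = 0 := by
        ext u v
        exact hent u v
      exact sub_eq_zero.mp (hM ▸ hM0)
    · intro heq
      have hAhP' : Ah = P := heq
      rw [← hAhAh, hAhP', hPP]
end
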